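/- ℓ₂-sensitivity of the weighted Chebyshev moment map: let n and k be positive integers and let x = (x_1,…,x_n) and x′ = (x′_1,…,x′_n) be two tuples of points in [-1,1] such that x_i = x′_i for all but exactly one index i. Then Σ_{j=1}^{k} (1/j)·( (1/n)·Σ_{i=1}^{n} T̄_j(x_i) − (1/n)·Σ_{i=1}^{n} T̄_j(x′_i) )² ≤ (8/(π·n²))·(1 + log k), where log denotes the natural logarithm. -/

import Mathlib

open Real

noncomputable section

/-- The Chebyshev polynomials of the first kind. -/
def chebT : ℕ → ℝ → ℝ
  | 0, _ => 1
  | 1, x => x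
  | n + 2, x => 2 * x * chebT (n + 1) x - chebT n x

/-- The normalized Chebyshev polynomials: `T̄_0 = T_0/√π`, `T̄_j = √(2/π)·T_j` for `j ≥ 1`. -/
def chebTbar (j : ℕ) (x : ℝ) : ℝ :=
  if j = 0 then chebT 0 x / Real.sqrt π else Real.sqrt (2 / π) * chebT j x

lemma chebT_cos (j : ℕ) (θ : ℝ) : chebT j (Real.cos θ) = Real.cos (j * θ) := by
  induction j using Nat.strong_induction_on with
  | _ j ih =>
    match j with
    | 0 => simp [chebT]
    | 1 => simp [chebT]
    | (m + 2) =>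
      rw [chebT, ih (m + 1) (by omega), ih m (by omega)]
      push_cast
      rw [show ((m:ℝ)+2)*θ = (((m:ℝ)+1)*θ) + θ by ring,
        show (m:ℝ) * θ = (((m:ℝ)+1)*θ) - θ by ring,
        Real.cos_add, Real.cos_sub]
      ring

lemma abs_chebT_le (j : ℕ) {t : ℝ} (ht : t ∈ Set.Icc (-1 : ℝ) 1) : |chebT j t| ≤ 1 := by
  have : t = Real.cos (Real.arccos t) := (Real.cos_arccos ht.1 ht.2).symm
  rw [this, chebT_cos]
  exact Real.abs_cos_le_one _

lemma abs_chebTbar_diff_sq_le (j : ℕ) {a b : ℝ} (ha : a ∈ Set.Icc (-1 : ℝ) 1)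
    (hb : b ∈ Set.Icc (-1 : ℝ) 1) : (chebTbar j a - chebTbar j b) ^ 2 ≤ 8 / π := by
  have hπ := Real.pi_pos
  have hs : Real.sqrt (2 / π) ≤ Real.sqrt (2 / π) := le_refl _
  have hd : |chebTbar j a - chebTbar j b| ≤ 2 * Real.sqrt (2 / π) := by
    unfold chebTbar
    split
    · simp [chebT]; positivity
    · calc |Real.sqrt (2/π) * chebT j a - Real.sqrt (2/π) * chebT j b|
          ≤ |Real.sqrt (2/π) * chebT j a| + |Real.sqrt (2/π) * chebT j b| := abs_sub _ _
        _ ≤ Real.sqrt (2/π) * 1 + Real.sqrt (2/π) * 1 := by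
            rw [abs_mul, abs_mul, abs_of_nonneg (Real.sqrt_nonneg _)]
            gcongr
            exacts [abs_chebT_le j ha, abs_chebT_le j hb]
        _ = 2 * Real.sqrt (2/π) := by ring
  calc (chebTbar j a - chebTbar j b) ^ 2 = |chebTbar j a - chebTbar j b| ^ 2 := (sq_abs _).symm
    _ ≤ (2 * Real.sqrt (2/π)) ^ 2 := by
        apply pow_le_pow_left₀ (abs_nonneg _) hd
    _ = 4 * (2 / π) := by
        rw [mul_pow, Real.sq_sqrt (by positivity)]; norm_num
    _ = 8 / π := by ring

theorem weighted_chebyshev_moment_sensitivity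
    (n k : ℕ) (hn : 0 < n) (hk : 0 < k)
    (x x' : Fin n → ℝ)
    (hx : ∀ i, x i ∈ Set.Icc (-1 : ℝ) 1) (hx' : ∀ i, x' i ∈ Set.Icc (-1 : ℝ) 1)
    (hneighbor : ∃! i, x i ≠ x' i) :
    ∑ j ∈ Finset.Icc 1 k, (1 / (j : ℝ)) *
        ((1 / (n : ℝ)) * ∑ i, chebTbar j (x i) -
          (1 / (n : ℝ)) * ∑ i, chebTbar j (x' i)) ^ 2 ≤
      (8 / (π * (n : ℝ) ^ 2)) * (1 + Real.log k) := by
  obtain ⟨i0, _, huniq⟩ := hneighbor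
  have hπ := Real.pi_pos
  have hn' : (0:ℝ) < n := by exact_mod_cast hn
  have key : ∀ j ∈ Finset.Icc 1 k, (1 / (j : ℝ)) *
        ((1 / (n : ℝ)) * ∑ i, chebTbar j (x i) -
          (1 / (n : ℝ)) * ∑ i, chebTbar j (x' i)) ^ 2 ≤
      (1 / (j : ℝ)) * (8 / (π * (n : ℝ) ^ 2)) := by
    intro j hj
    have hj1 : 1 ≤ j := (Finset.mem_Icc.mp hj).1
    have hdiff : (1 / (n : ℝ)) * ∑ i, chebTbar j (x i) -
        (1 / (n : ℝ)) * ∑ i, chebTbar j (x' i)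
        = (1 / (n:ℝ)) * (chebTbar j (x i0) - chebTbar j (x' i0)) := by
      rw [← mul_sub, ← Finset.sum_sub_distrib]
      congr 1
      rw [Finset.sum_eq_single i0]
      · intro i _ hi
        have : x i = x' i := by
          by_contra h
          exact hi (huniq i h)
        rw [this, sub_self]
      · simp
    rw [hdiff, mul_pow]
    have hb := abs_chebTbar_diff_sq_le j (hx i0) (hx' i0)
    have hj0 : (0:ℝ) < j := by exact_mod_cast hj1
    calc (1 / (j:ℝ)) * ((1/(n:ℝ))^2 * (chebTbar j (x i0) - chebTbar j (x' i0))^2)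
        ≤ (1 / (j:ℝ)) * ((1/(n:ℝ))^2 * (8/π)) := by
          apply mul_le_mul_of_nonneg_left _ (by positivity)
          exact mul_le_mul_of_nonneg_left hb (by positivity)
      _ = (1 / (j:ℝ)) * (8 / (π * (n:ℝ)^2)) := by
          congr 1
          rw [div_pow, one_pow]
          field_simp
  calc ∑ j ∈ Finset.Icc 1 k, (1 / (j : ℝ)) *
        ((1 / (n : ℝ)) * ∑ i, chebTbar j (x i) -
          (1 / (n : ℝ)) * ∑ i, chebTbar j (x' i)) ^ 2
      ≤ ∑ j ∈ Finset.Icc 1 k, (1 / (j : ℝ)) * (8 / (π * (n : ℝ) ^ 2)) :=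
        Finset.sum_le_sum key
    _ = (8 / (π * (n:ℝ)^2)) * ∑ j ∈ Finset.Icc 1 k, (1 / (j : ℝ)) := by
        rw [Finset.mul_sum]; apply Finset.sum_congr rfl; intros; ring
    _ ≤ (8 / (π * (n:ℝ)^2)) * (1 + Real.log k) := by
        apply mul_le_mul_of_nonneg_left _ (by positivity)
        have h1 : ∑ j ∈ Finset.Icc 1 k, (1 / (j : ℝ)) = (harmonic k : ℝ) := by
          rw [harmonic_eq_sum_Icc]
          push_cast
          simp [one_div]
        rw [h1]
        exact harmonic_le_one_add_log k
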